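/- arXiv:2310.10824 — 5 statements merged into one kernel-verified Lean document; each statement's English description precedes it below -/
import Mathlib

section
/- Let R be a commutative ring equipped with a ℤ/2-grading R = R⁺ ⊕ R⁻ (a graded ring structure indexed by ℤ/2ℤ), and let 𝔞 ⊆ R be a homogeneous ideal, so 𝔞 = 𝔞⁺ ⊕ 𝔞⁻ where 𝔞± = 𝔞 ∩ R±. Let J be the ideal of R generated by the even part 𝔞⁺. Then for every i ≥ 0 one has J^i ⊆ 𝔞^i and 𝔞^{2i} ⊆ J^i. Consequently, the 𝔞-adic topology on R coincides with the J-adic topology. -/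
/-!
Over `ℤ/2` the product of two odd elements is even. Splitting elements of the homogeneous ideal
`𝔞` into homogeneous components, every product of two elements of `𝔞` is a sum of products of
homogeneous elements of `𝔞`, each of which has an even factor in `𝔞` or is itself even. Hence
`J ≤ 𝔞` and `𝔞 ^ 2 ≤ J`, so the two families of powers are cofinal in each other.
-/

open DirectSum

section Topology

variable {R : Type*} [CommRing R]

theorem Ideal.adicTopology_eq_of_forall_exists_pow_le {I J : Ideal R}
    (hIJ : ∀ n, ∃ m, I ^ m ≤ J ^ n) (hJI : ∀ n, ∃ m, J ^ m ≤ I ^ n) :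
    I.adicTopology = J.adicTopology := by
  let := I.adicTopology
  have : IsTopologicalRing R := I.ringFilterBasis.isTopologicalRing
  have hI : IsAdic I := rfl
  change IsAdic J
  rw [isAdic_iff] at hI ⊢
  refine ⟨fun n => ?_, fun s hs => ?_⟩
  · obtain ⟨m, hm⟩ := hIJ n
    exact Submodule.isOpen_mono hm (hI.1 m)
  · obtain ⟨n, hn⟩ := hI.2 s hs
    obtain ⟨m, hm⟩ := hJI n
    exact ⟨m, (SetLike.coe_subset_coe.2 hm).trans hn⟩

end Topology

section ZModTwoGraded

variable {R σ : Type*} [CommSemiring R] [SetLike σ R] [AddSubmonoidClass σ R]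
  (𝒜 : ZMod 2 → σ) [GradedRing 𝒜] {𝔞 : Ideal R}

theorem mul_mem_span_inter_zero_of_mem {i j : ZMod 2} {x y : R} (hx : x ∈ 𝔞) (hy : y ∈ 𝔞)
    (hxi : x ∈ 𝒜 i) (hyj : y ∈ 𝒜 j) :
    x * y ∈ Ideal.span ((𝔞 : Set R) ∩ 𝒜 0) := by
  have hcases : ∀ k : ZMod 2, k = 0 ∨ k = 1 := by decide
  rcases hcases i with rfl | rfl
  · exact Ideal.mul_mem_right _ _ (Ideal.subset_span ⟨hx, hxi⟩)
  rcases hcases j with rfl | rfl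
  · exact Ideal.mul_mem_left _ _ (Ideal.subset_span ⟨hy, hyj⟩)
  have hxy : x * y ∈ 𝒜 (1 + 1) := SetLike.mul_mem_graded hxi hyj
  exact Ideal.subset_span ⟨Ideal.mul_mem_right _ _ hx, hxy⟩

theorem Ideal.IsHomogeneous.mul_self_le_span_inter_zero (h𝔞 : 𝔞.IsHomogeneous 𝒜) :
    𝔞 * 𝔞 ≤ Ideal.span ((𝔞 : Set R) ∩ 𝒜 0) := by
  classical
  refine Ideal.mul_le.2 fun x hx y hy => ?_
  rw [← sum_support_decompose 𝒜 x, ← sum_support_decompose 𝒜 y, Finset.sum_mul_sum]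
  exact Ideal.sum_mem _ fun i _ => Ideal.sum_mem _ fun j _ =>
    mul_mem_span_inter_zero_of_mem 𝒜 (h𝔞 i hx) (h𝔞 j hy) (SetLike.coe_mem _) (SetLike.coe_mem _)

end ZModTwoGraded

/-- Let `R` be a commutative ring with a `ℤ/2`-grading
`R = R⁺ ⊕ R⁻` and let `𝔞 ⊆ R` be a homogeneous ideal.  If `J` is the ideal
generated by the even part `𝔞⁺ = 𝔞 ∩ R⁺`, then `J^i ⊆ 𝔞^i` and `𝔞^{2i} ⊆ J^i`
for all `i ≥ 0`; consequently the `𝔞`-adic and the `J`-adic topologies on `R`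
coincide. -/
theorem statement1 {R : Type*} [CommRing R]
    (𝒜 : ZMod 2 → AddSubgroup R) [GradedRing 𝒜]
    (𝔞 : Ideal R) (h𝔞 : 𝔞.IsHomogeneous 𝒜)
    (J : Ideal R) (hJ : J = Ideal.span ((𝔞 : Set R) ∩ (𝒜 0 : Set R))) :
    (∀ i : ℕ, J ^ i ≤ 𝔞 ^ i ∧ 𝔞 ^ (2 * i) ≤ J ^ i) ∧
      𝔞.adicTopology = J.adicTopology := by
  have hle : J ≤ 𝔞 := hJ ▸ Ideal.span_le.2 Set.inter_subset_left
  have hsq : 𝔞 * 𝔞 ≤ J := hJ ▸ h𝔞.mul_self_le_span_inter_zero 𝒜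
  have hpow : ∀ i : ℕ, J ^ i ≤ 𝔞 ^ i ∧ 𝔞 ^ (2 * i) ≤ J ^ i := fun i =>
    ⟨Ideal.pow_right_mono hle i, by rw [pow_mul, sq]; exact Ideal.pow_right_mono hsq i⟩
  exact ⟨hpow, Ideal.adicTopology_eq_of_forall_exists_pow_le
    (fun n => ⟨2 * n, (hpow n).2⟩) (fun n => ⟨n, (hpow n).1⟩)⟩
end

section
/- Let (X_n)_{n∈ℕ} be an acceptable gadget over a scheme S, and let Y be a smooth S-scheme of finite type. Then the base-changed sequence (X_n ×_S Y)_{n∈ℕ}, with the induced closed immersions X_n ×_S Y ↪ X_m ×_S Y, is an acceptable gadget over Y. -/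
open CategoryTheory Limits AlgebraicGeometry MvPolynomial

universe u

attribute [local instance] MvPolynomial.gradedAlgebra

namespace Gadget

noncomputable section

/-! ### Algebraic simplices -/

/-- The defining ideal `(x_0 + ⋯ + x_i - 1)` of the algebraic `i`-simplex. -/
def simplexIdeal (R : Type u) [CommRing R] (i : ℕ) : Ideal (MvPolynomial (Fin (i + 1)) R) :=
  Ideal.span {(∑ j, X j) - 1}

/-- The defining ideal `(x_0 + ⋯ + x_i - 1, x_0 ⋯ x_i)` of the boundary of the
algebraic `i`-simplex. -/
def simplexBoundaryIdeal (R : Type u) [CommRing R] (i : ℕ) :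
    Ideal (MvPolynomial (Fin (i + 1)) R) :=
  Ideal.span {(∑ j, X j) - 1, ∏ j, X j}

/-- The coordinate ring `R[x_0,…,x_i]/(x_0 + ⋯ + x_i - 1)` of the algebraic
`i`-simplex over `R`. -/
abbrev SimplexRing (R : Type u) [CommRing R] (i : ℕ) :=
  MvPolynomial (Fin (i + 1)) R ⧸ simplexIdeal R i

/-- The coordinate ring of the boundary `∂Δ^i_R`. -/
abbrev BoundaryRing (R : Type u) [CommRing R] (i : ℕ) :=
  MvPolynomial (Fin (i + 1)) R ⧸ simplexBoundaryIdeal R i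

/-- The algebraic `i`-simplex `Δ^i_R = Spec R[x_0,…,x_i]/(Σ x_j - 1)`. -/
def algSimplex (R : Type u) [CommRing R] (i : ℕ) : Scheme.{u} :=
  Spec (CommRingCat.of (SimplexRing R i))

/-- The boundary `∂Δ^i_R` of the algebraic `i`-simplex, the closed subscheme cut
out by `x_0 ⋯ x_i = 0`. -/
def algBoundary (R : Type u) [CommRing R] (i : ℕ) : Scheme.{u} :=
  Spec (CommRingCat.of (BoundaryRing R i))

/-- The closed immersion `∂Δ^i_R ↪ Δ^i_R`. -/
def boundaryIncl (R : Type u) [CommRing R] (i : ℕ) : algBoundary R i ⟶ algSimplex R i :=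
  Spec.map (CommRingCat.ofHom (Ideal.Quotient.factor
    (Ideal.span_mono (Set.singleton_subset_iff.mpr (Set.mem_insert _ _)))))

/-- The structure morphism `Δ^i_R ⟶ Spec R`. -/
def algSimplexToSpec (R : Type u) [CommRing R] (i : ℕ) :
    algSimplex R i ⟶ Spec (CommRingCat.of R) :=
  Spec.map (CommRingCat.ofHom ((Ideal.Quotient.mk (simplexIdeal R i)).comp MvPolynomial.C))

/-- The structure morphism `∂Δ^i_R ⟶ Spec R`. -/
def algBoundaryToSpec (R : Type u) [CommRing R] (i : ℕ) :
    algBoundary R i ⟶ Spec (CommRingCat.of R) :=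
  Spec.map (CommRingCat.ofHom ((Ideal.Quotient.mk (simplexBoundaryIdeal R i)).comp
    MvPolynomial.C))

/-! ### Regular local rings -/

/-- A Noetherian local ring is regular if its maximal ideal is generated by a
family whose cardinality is the Krull dimension of the ring. -/
def IsRegularLocal (R : Type u) [CommRing R] [IsLocalRing R] : Prop :=
  IsNoetherianRing R ∧ ∃ s : Finset R, Ideal.span (s : Set R) = IsLocalRing.maximalIdeal R ∧
    (s.card : WithBot (WithTop ℕ)) = ringKrullDim R

/-! ### Quasi-projective schemes -/

/-- Projective `N`-space over `ℤ`. -/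
def ProjSpace (N : ℕ) : Scheme.{u} :=
  Proj (homogeneousSubmodule (Fin (N + 1)) (ULift.{u} ℤ))

/-- Projective `N`-space over a base scheme `S`. -/
def ProjSpaceOver (N : ℕ) (S : Scheme.{u}) : Scheme.{u} :=
  pullback (terminal.from (ProjSpace.{u} N)) (terminal.from S)

/-- A morphism `f : X ⟶ S` is quasi-projective if it factors through some
`ℙ^N_S` as a (locally closed) immersion, i.e. as a closed immersion followed by
an open immersion, compatibly with the projection to `S`. -/
def IsQuasiProjective {X S : Scheme.{u}} (f : X ⟶ S) : Prop :=
  ∃ (N : ℕ) (W : Scheme.{u}) (a : X ⟶ W) (b : W ⟶ ProjSpaceOver N S),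
    IsClosedImmersion a ∧ IsOpenImmersion b ∧
      a ≫ b ≫ pullback.snd (terminal.from (ProjSpace.{u} N)) (terminal.from S) = f

/-! ### Gadgets -/

/-- The data of a (totally ordered, countable) system of `S`-schemes with
transition maps, compatible with composition. -/
structure GadgetData (ι : Type) [Preorder ι] (S : Scheme.{u}) where
  /-- the schemes in the system -/
  X : ι → Scheme.{u}
  /-- the structure morphisms over `S` -/
  p : ∀ n, X n ⟶ S
  /-- the transition maps -/
  map : ∀ {n m : ι}, n ≤ m → (X n ⟶ X m)
  map_p : ∀ {n m : ι} (h : n ≤ m), map h ≫ p m = p n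
  map_refl : ∀ n : ι, map (le_refl n) = 𝟙 (X n)
  map_comp : ∀ {n m k : ι} (h₁ : n ≤ m) (h₂ : m ≤ k),
    map h₁ ≫ map h₂ = map (h₁.trans h₂)

/-- A gadget `(X_n)` over `S` is acceptable if the `X_n` are smooth and
quasi-projective over `S`, the transition maps are closed immersions, and every
map `∂Δ^i_R → X_n` over `S`, for `R` a regular Henselian local ring, extends to
a map `Δ^i_R → X_m` for some `m ≥ n`. -/
structure IsAcceptableGadget {ι : Type} [Preorder ι] {S : Scheme.{u}}
    (D : GadgetData ι S) : Prop where
  smooth : ∀ n, IsSmooth (D.p n)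
  quasiProjective : ∀ n, IsQuasiProjective (D.p n)
  closedImmersion : ∀ {n m : ι} (h : n ≤ m), IsClosedImmersion (D.map h)
  lifting : ∀ (R : Type u) [CommRing R] [HenselianLocalRing R],
    IsRegularLocal R → ∀ (σ : Spec (CommRingCat.of R) ⟶ S) (i : ℕ) (n : ι)
    (u : algBoundary R i ⟶ D.X n), u ≫ D.p n = algBoundaryToSpec R i ≫ σ →
    ∃ (m : ι) (h : n ≤ m) (v : algSimplex R i ⟶ D.X m),
      boundaryIncl R i ≫ v = u ≫ D.map h ∧ v ≫ D.p m = algSimplexToSpec R i ≫ σ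
variable {ι : Type} [Preorder ι] {S Y : Scheme.{u}}

/-- The base change of a system of `S`-schemes along `q : Y ⟶ S`. -/
def GadgetData.baseChange (D : GadgetData ι S) (q : Y ⟶ S) : GadgetData ι Y where
  X n := pullback (D.p n) q
  p n := pullback.snd (D.p n) q
  map {n m} h := pullback.map (D.p n) q (D.p m) q (D.map h) (𝟙 Y) (𝟙 S)
    (by simp [D.map_p]) (by simp)
  map_p {n m} h := by
    simp only [pullback.map, Category.comp_id]
    exact pullback.lift_snd _ _ _
  map_refl n := by simp [D.map_refl]
  map_comp {n m k} h₁ h₂ := by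
    rw [pullback.map_comp]
    apply pullback.hom_ext <;> simp [D.map_comp]

/-- The base change of an acceptable gadget `(X_n)_{n∈ℕ}` over
`S` along a smooth finite type morphism `Y ⟶ S` is an acceptable gadget
`(X_n ×_S Y)_{n∈ℕ}` over `Y`. -/
theorem statement5 {S Y : Scheme.{u}} (D : GadgetData ℕ S)
    (hD : IsAcceptableGadget D) (q : Y ⟶ S)
    (hq₁ : IsSmooth q) (hq₂ : LocallyOfFiniteType q) (hq₃ : QuasiCompact q) :
    IsAcceptableGadget (D.baseChange q) := by
  haveI : MorphismProperty.IsStableUnderBaseChange @IsSmooth :=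
    isSmooth_isStableUnderBaseChange
  haveI : MorphismProperty.IsStableUnderComposition @IsClosedImmersion.{u} :=
    MorphismProperty.IsMultiplicative.toIsStableUnderComposition
  constructor
  · intro n
    haveI : MorphismProperty.IsStableUnderBaseChangeAlong @IsSmooth.{u} q :=
      MorphismProperty.instIsStableUnderBaseChangeAlongOfIsStableUnderBaseChange _ q
    exact MorphismProperty.pullback_snd (P := @IsSmooth.{u}) _ _ (hD.smooth n)
  · intro n
    obtain ⟨N, W, a, b, ha, hb, habf⟩ := hD.quasiProjective n
    refine ⟨N, pullback (b ≫ pullback.snd (terminal.from (ProjSpace.{u} N)) (terminal.from S)) q,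
      pullback.map _ _ _ _ a (𝟙 Y) (𝟙 S)
        (by rw [Category.comp_id, ← habf]) (by simp),
      (pullback.map _ _ _ _ b (𝟙 Y) (𝟙 S) (by simp) (by simp)) ≫
        (pullbackLeftPullbackSndIso (terminal.from (ProjSpace.{u} N)) (terminal.from S) q ≪≫
          pullback.congrHom rfl (terminal.comp_from q)).hom, ?_, ?_, ?_⟩
    · exact MorphismProperty.pullback_map (P := @IsClosedImmersion.{u}) ha inferInstance
        (by rw [← habf]) (by simp)
    · haveI : IsOpenImmersion (pullback.map
          (b ≫ pullback.snd (terminal.from (ProjSpace.{u} N)) (terminal.from S)) q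
          (pullback.snd (terminal.from (ProjSpace.{u} N)) (terminal.from S)) q
          b (𝟙 Y) (𝟙 S) (by simp; rfl) (by simp)) :=
        MorphismProperty.pullback_map (P := @IsOpenImmersion.{u}) hb inferInstance (by simp) (by simp)
      exact MorphismProperty.comp_mem @IsOpenImmersion _ _ this (@IsOpenImmersion.of_isIso _ _ _ (Iso.isIso_hom _))
    · show _ = (GadgetData.baseChange D q).p n
      simp [GadgetData.baseChange, pullback.congrHom_hom, ProjSpaceOver]
      erw [pullback.lift_snd]
      simp
      erw [pullback.lift_snd]
      simp
      erw [pullback.lift_snd]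
      simp
  · intro n m h
    exact MorphismProperty.pullback_map (P := @IsClosedImmersion.{u})
      (hD.closedImmersion h) inferInstance ((D.map_p h).symm) (by simp)
  · intro R _ _ hR σ i n u hu
    have key : boundaryIncl R i ≫ algSimplexToSpec R i = algBoundaryToSpec R i := by
      rw [boundaryIncl, algSimplexToSpec, algBoundaryToSpec, ]
      erw [← Spec.map_comp]
      congr 1
    have husnd : u ≫ pullback.snd (D.p n) q = algBoundaryToSpec R i ≫ σ := hu
    have hu' : (u ≫ pullback.fst (D.p n) q) ≫ D.p n = algBoundaryToSpec R i ≫ (σ ≫ q) := by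
      erw [Category.assoc, pullback.condition, ← Category.assoc, husnd, Category.assoc]
    obtain ⟨m, hnm, v, hv₁, hv₂⟩ := hD.lifting R hR (σ ≫ q) i n (u ≫ pullback.fst (D.p n) q) hu'
    refine ⟨m, hnm, pullback.lift v (algSimplexToSpec R i ≫ σ)
      (by rw [hv₂, Category.assoc]), ?_, ?_⟩
    · apply pullback.hom_ext
      · simp only [GadgetData.baseChange, Category.assoc, pullback.lift_fst]
        erw [hv₁, Category.assoc, Category.assoc, pullback.lift_fst]
        rfl
      · simp only [GadgetData.baseChange, Category.assoc, pullback.lift_snd,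
          Category.comp_id]
        erw [← Category.assoc, key, Category.assoc, pullback.lift_snd, Category.comp_id, husnd]
    · show pullback.lift _ _ _ ≫ pullback.snd _ _ = _
      rw [pullback.lift_snd]

end

end Gadget
end

section
/- Let n ≥ 1 and work in the polynomial ring ℤ[X_1,…,X_n][t]. For every k with 1 ≤ k ≤ n, the coefficient of t^k in the product ∏_{i=1}^n (1 + X_i·t + t²) is a symmetric polynomial in X_1,…,X_n equal to e_k(X_1,…,X_n) + Σ_{b≥1, 2b≤k} C(n−k+2b, b)·e_{k−2b}(X_1,…,X_n), where e_j denotes the j-th elementary symmetric polynomial (with e_0 = 1) and C(·,·) a binomial coefficient. In particular, this coefficient equals e_k plus a ℤ-linear combination of elementary symmetric polynomials e_j with j < k. -/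
open Polynomial Finset

lemma aux1 {R : Type*} [CommSemiring R] (m d : ℕ) :
    ((1 + (Polynomial.X : R[X]) ^ 2) ^ m).coeff d
      = if d % 2 = 0 then (m.choose (d / 2) : R) else 0 := by
  rw [add_comm, add_pow]
  simp only [one_pow, mul_one, ← pow_mul, ← Polynomial.C_eq_natCast,
    Polynomial.finset_sum_coeff, Polynomial.coeff_mul_C, Polynomial.coeff_X_pow,
    ite_mul, one_mul, zero_mul]
  by_cases hd : d % 2 = 0
  · rw [if_pos hd]
    have h : ∀ j : ℕ, (d = 2 * j) ↔ (j = d / 2) := by omega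
    simp_rw [h]
    rw [Finset.sum_ite_eq' (Finset.range (m + 1)) (d / 2)]
    by_cases hm : d / 2 ∈ Finset.range (m + 1)
    · rw [if_pos hm]
    · rw [if_neg hm, Nat.choose_eq_zero_of_lt (by simpa using hm), Nat.cast_zero]
  · rw [if_neg hd]
    apply Finset.sum_eq_zero
    intro j hj
    rw [if_neg]
    omega

/-- For `1 ≤ k ≤ n`, the coefficient of `t^k` in
`∏_{i=1}^n (1 + X_i t + t²)` over `ℤ[X_1,…,X_n]` equals
`e_k + Σ_{b ≥ 1, 2b ≤ k} C(n-k+2b, b) · e_{k-2b}`. -/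
theorem statement13 (n k : ℕ) (hn : 1 ≤ n) (hk1 : 1 ≤ k) (hkn : k ≤ n) :
    (∏ i : Fin n,
        (1 + Polynomial.C (MvPolynomial.X i : MvPolynomial (Fin n) ℤ) * Polynomial.X
          + Polynomial.X ^ 2)).coeff k
      = MvPolynomial.esymm (Fin n) ℤ k
        + ∑ b ∈ Finset.Icc 1 (k / 2),
            (Nat.choose (n - k + 2 * b) b : MvPolynomial (Fin n) ℤ)
              * MvPolynomial.esymm (Fin n) ℤ (k - 2 * b) := by
  set R := MvPolynomial (Fin n) ℤ
  set G : ℕ → R := fun j =>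
    if j ≤ k then (if (k - j) % 2 = 0 then ((n - j).choose ((k - j) / 2) : R) else 0) else 0
    with hG
  have hrw : ∀ i : Fin n,
      (1 + Polynomial.C (MvPolynomial.X i : R) * Polynomial.X + Polynomial.X ^ 2)
        = Polynomial.C (MvPolynomial.X i) * Polynomial.X + (1 + Polynomial.X ^ 2) := by
    intro i; ring
  have step1 :
      (∏ i : Fin n,
        (1 + Polynomial.C (MvPolynomial.X i : R) * Polynomial.X + Polynomial.X ^ 2)).coeff k
      = ∑ t ∈ (Finset.univ : Finset (Fin n)).powerset,
          (∏ i ∈ t, MvPolynomial.X i : R) * G t.card := by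
    simp_rw [hrw]
    rw [Finset.prod_add, Polynomial.finset_sum_coeff]
    refine Finset.sum_congr rfl fun t ht => ?_
    rw [Finset.prod_mul_distrib, Finset.prod_const, ← map_prod, Finset.prod_const,
      Finset.card_sdiff_of_subset (Finset.mem_powerset.mp ht), Finset.card_univ, Fintype.card_fin,
      mul_right_comm, Polynomial.coeff_mul_X_pow']
    simp only [hG]
    by_cases hle : t.card ≤ k
    · rw [if_pos hle, if_pos hle, Polynomial.coeff_C_mul, aux1]
    · rw [if_neg hle, if_neg hle, mul_zero]
  rw [step1, Finset.sum_powerset]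
  have step2 : ∀ j ∈ Finset.range (n + 1),
      (∑ t ∈ Finset.powersetCard j (Finset.univ : Finset (Fin n)),
        (∏ i ∈ t, MvPolynomial.X i : R) * G t.card)
      = MvPolynomial.esymm (Fin n) ℤ j * G j := by
    intro j hj
    rw [MvPolynomial.esymm, Finset.sum_mul]
    refine Finset.sum_congr rfl fun t ht => ?_
    rw [(Finset.mem_powersetCard.mp ht).2]
  rw [Finset.card_univ, Fintype.card_fin, Finset.sum_congr rfl step2]
  -- reindex
  have himg : Finset.range (k / 2 + 1) ⊆ Finset.range (n + 1) := by
    intro b hb; simp only [Finset.mem_range] at *; omega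
  have hinj : ∀ b₁ ∈ Finset.range (k / 2 + 1), ∀ b₂ ∈ Finset.range (k / 2 + 1),
      k - 2 * b₁ = k - 2 * b₂ → b₁ = b₂ := by
    intro b₁ h₁ b₂ h₂ h; simp only [Finset.mem_range] at *; omega
  have hsub : (Finset.range (k / 2 + 1)).image (fun b => k - 2 * b) ⊆ Finset.range (n + 1) := by
    intro j hj
    simp only [Finset.mem_image, Finset.mem_range] at *
    obtain ⟨b, hb, rfl⟩ := hj
    omega
  have hzero : ∀ j ∈ Finset.range (n + 1),
      j ∉ (Finset.range (k / 2 + 1)).image (fun b => k - 2 * b) →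
      MvPolynomial.esymm (Fin n) ℤ j * G j = 0 := by
    intro j hj hjn
    simp only [Finset.mem_image, Finset.mem_range, not_exists, not_and] at hjn
    simp only [hG]
    by_cases h1 : j ≤ k
    · by_cases h2 : (k - j) % 2 = 0
      · exfalso
        exact hjn ((k - j) / 2) (by omega) (by omega)
      · simp [h1, h2]
    · simp [h1]
  rw [← Finset.sum_subset hsub hzero, Finset.sum_image hinj]
  have hterm : ∀ b ∈ Finset.range (k / 2 + 1),
      MvPolynomial.esymm (Fin n) ℤ (k - 2 * b) * G (k - 2 * b)
        = MvPolynomial.esymm (Fin n) ℤ (k - 2 * b) * ((n - k + 2 * b).choose b : R) := by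
    intro b hb
    simp only [Finset.mem_range] at hb
    simp only [hG]
    have h1 : k - 2 * b ≤ k := by omega
    have h2 : k - (k - 2 * b) = 2 * b := by omega
    have h3 : n - (k - 2 * b) = n - k + 2 * b := by omega
    rw [if_pos h1, h2, h3]
    simp [Nat.mul_div_cancel_left b (by norm_num : 0 < 2)]
  rw [Finset.sum_congr rfl hterm]
  have hsplit : Finset.range (k / 2 + 1) = insert 0 (Finset.Icc 1 (k / 2)) := by
    ext b
    simp only [Finset.mem_range, Finset.mem_insert, Finset.mem_Icc]
    omega
  rw [hsplit, Finset.sum_insert (by simp)]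
  simp only [mul_zero, Nat.sub_zero, Nat.choose_zero_right, Nat.cast_one, mul_one]
  congr 1
  refine Finset.sum_congr rfl fun b hb => mul_comm _ _
end

section
/- Let C be a small category, U an object of C, and {f_j: U_j → U}_{j∈J} a finite family of morphisms such that all fiber products U_j ×_U U_{j'} exist in C. Let h_𝒰 ⊆ h_U denote the sieve generated by the family, regarded as a sub-presheaf of sets of the representable presheaf h_U (so h_𝒰(T) consists of those morphisms T → U that factor through some f_j). Then: (1) h_𝒰 is the coequalizer, in the category of presheaves of sets, of the two natural maps ∐_{j,j'} h_{U_j ×_U U_{j'}} ⇉ ∐_j h_{U_j}; and (2) h_𝒰 is a compact object of the presheaf category: for every filtered diagram (F_i) of presheaves of sets, the canonical map colim_i Hom(h_𝒰, F_i) → Hom(h_𝒰, colim_i F_i) is a bijection. -/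
open CategoryTheory Limits Opposite

universe u

section

variable {C : Type u} [SmallCategory C] {U : C} {J : Type u}
  (Uj : J → C) (f : ∀ j, Uj j ⟶ U) [∀ j j', HasPullback (f j) (f j')]

/-- The sieve generated by the family `{f_j : U_j → U}`, as a presheaf. -/
noncomputable def sieveFunctor : Cᵒᵖ ⥤ Type u :=
  (Sieve.generate (Presieve.ofArrows Uj f)).functor

/-- The canonical map `∐_j h_{U_j} ⟶ h_𝒰`. -/
noncomputable def sievePi :
    (∐ fun j => yoneda.obj (Uj j)) ⟶ sieveFunctor Uj f :=
  Sigma.desc fun j =>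
    { app := fun T => TypeCat.ofHom fun (g : T.unop ⟶ Uj j) =>
        ⟨g ≫ f j, Uj j, g, f j, Presieve.ofArrows.mk j, rfl⟩
      naturality := by
        intros T T' u
        ext g
        apply Subtype.ext
        show (u.unop ≫ g) ≫ f j = u.unop ≫ (g ≫ f j)
        simp }

/-- The first of the two natural maps `∐_{j,j'} h_{U_j ×_U U_{j'}} ⟶ ∐_j h_{U_j}`,
induced by the first projections. -/
noncomputable def sieveFst :
    (∐ fun p : J × J => yoneda.obj (pullback (f p.1) (f p.2))) ⟶
      (∐ fun j => yoneda.obj (Uj j)) :=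
  Sigma.desc fun p => yoneda.map (pullback.fst (f p.1) (f p.2)) ≫ Sigma.ι (fun j => yoneda.obj (Uj j)) p.1

/-- The second of the two natural maps `∐_{j,j'} h_{U_j ×_U U_{j'}} ⟶ ∐_j h_{U_j}`,
induced by the second projections. -/
noncomputable def sieveSnd :
    (∐ fun p : J × J => yoneda.obj (pullback (f p.1) (f p.2))) ⟶
      (∐ fun j => yoneda.obj (Uj j)) :=
  Sigma.desc fun p => yoneda.map (pullback.snd (f p.1) (f p.2)) ≫ Sigma.ι (fun j => yoneda.obj (Uj j)) p.2

lemma sieve_cofork_condition :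
    sieveFst Uj f ≫ sievePi Uj f = sieveSnd Uj f ≫ sievePi Uj f := by
  apply Sigma.hom_ext
  intro p
  simp only [sieveFst, sieveSnd, sievePi, colimit.ι_desc_assoc, Category.assoc,
    Cofan.mk_ι_app, colimit.ι_desc]
  ext T (g : T.unop ⟶ pullback (f p.1) (f p.2))
  apply Subtype.ext
  show (g ≫ pullback.fst (f p.1) (f p.2)) ≫ f p.1 = (g ≫ pullback.snd (f p.1) (f p.2)) ≫ f p.2
  simp [pullback.condition]

end

namespace Statement14Aux

section

variable {C : Type u} [SmallCategory C] {U : C} {J : Type u}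
  (Uj : J → C) (f : ∀ j, Uj j ⟶ U) [∀ j j', HasPullback (f j) (f j')]

/-- The tautological element `f j` of the sieve at `U_j`. -/
def elt (j : J) : (sieveFunctor Uj f).obj (op (Uj j)) :=
  ⟨f j, Uj j, 𝟙 _, f j, Presieve.ofArrows.mk j, Category.id_comp _⟩

lemma exists_factor {T : Cᵒᵖ} (s : (sieveFunctor Uj f).obj T) :
    ∃ (j : J) (h : T.unop ⟶ Uj j), h ≫ f j = s.1 := by
  obtain ⟨g, Y, h, w, hw, eq⟩ := s
  cases hw with
  | mk j => exact ⟨j, h, eq⟩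

/-- A choice of index for a factorization of an element of the sieve. -/
noncomputable def idx {T : Cᵒᵖ} (s : (sieveFunctor Uj f).obj T) : J :=
  (exists_factor Uj f s).choose

/-- A choice of factorization of an element of the sieve. -/
noncomputable def fac {T : Cᵒᵖ} (s : (sieveFunctor Uj f).obj T) :
    T.unop ⟶ Uj (idx Uj f s) :=
  (exists_factor Uj f s).choose_spec.choose

lemma fac_spec {T : Cᵒᵖ} (s : (sieveFunctor Uj f).obj T) :
    fac Uj f s ≫ f (idx Uj f s) = s.1 :=
  (exists_factor Uj f s).choose_spec.choose_spec

lemma map_elt {T : Cᵒᵖ} (s : (sieveFunctor Uj f).obj T) {j : J} (h : T.unop ⟶ Uj j)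
    (hh : h ≫ f j = s.1) :
    (sieveFunctor Uj f).map h.op (elt Uj f j) = s :=
  Subtype.ext hh

/-- Two maps out of the sieve agreeing on the tautological elements are equal. -/
lemma natTrans_ext_of_elt {W : Cᵒᵖ ⥤ Type u} {α β : sieveFunctor Uj f ⟶ W}
    (h : ∀ j, α.app (op (Uj j)) (elt Uj f j) = β.app (op (Uj j)) (elt Uj f j)) :
    α = β := by
  ext T s
  simp only [TypeCat.Fun.toFun_apply]
  rw [← map_elt Uj f s (fac Uj f s) (fac_spec Uj f s),
    FunctorToTypes.naturality, FunctorToTypes.naturality, h]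

lemma compat_of_pullback {W : Cᵒᵖ ⥤ Type u} (w : ∀ j, W.obj (op (Uj j)))
    (compat : ∀ p : J × J,
      W.map (pullback.fst (f p.1) (f p.2)).op (w p.1) =
        W.map (pullback.snd (f p.1) (f p.2)).op (w p.2))
    {T : C} {j j' : J} (h : T ⟶ Uj j) (h' : T ⟶ Uj j') (hw : h ≫ f j = h' ≫ f j') :
    W.map h.op (w j) = W.map h'.op (w j') := by
  have hl : (pullback.lift h h' hw) ≫ pullback.fst (f j) (f j') = h := pullback.lift_fst _ _ _
  have hl' : (pullback.lift h h' hw) ≫ pullback.snd (f j) (f j') = h' := pullback.lift_snd _ _ _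
  calc W.map h.op (w j)
      = W.map (pullback.lift h h' hw).op (W.map (pullback.fst (f j) (f j')).op (w j)) := by
        rw [← FunctorToTypes.map_comp_apply, ← op_comp, hl]
    _ = W.map (pullback.lift h h' hw).op (W.map (pullback.snd (f j) (f j')).op (w j')) := by
        rw [compat (j, j')]
    _ = W.map h'.op (w j') := by
        rw [← FunctorToTypes.map_comp_apply, ← op_comp, hl']

/-- Build a map out of the sieve from a compatible family of elements. -/
noncomputable def mkNatTrans {W : Cᵒᵖ ⥤ Type u} (w : ∀ j, W.obj (op (Uj j)))
    (compat : ∀ p : J × J,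
      W.map (pullback.fst (f p.1) (f p.2)).op (w p.1) =
        W.map (pullback.snd (f p.1) (f p.2)).op (w p.2)) :
    sieveFunctor Uj f ⟶ W where
  app T := TypeCat.ofHom fun s => W.map (fac Uj f s).op (w (idx Uj f s))
  naturality T T' u := by
    ext s
    have hkey : (fac Uj f ((sieveFunctor Uj f).map u s)) ≫ f (idx Uj f ((sieveFunctor Uj f).map u s)) =
        (u.unop ≫ fac Uj f s) ≫ f (idx Uj f s) := by
      rw [fac_spec, Category.assoc, fac_spec]
      rfl
    show W.map (fac Uj f ((sieveFunctor Uj f).map u s)).op (w _) =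
      W.map u (W.map (fac Uj f s).op (w _))
    rw [compat_of_pullback Uj f w compat _ _ hkey, op_comp, FunctorToTypes.map_comp_apply]
    rfl

lemma mkNatTrans_app {W : Cᵒᵖ ⥤ Type u} (w : ∀ j, W.obj (op (Uj j)))
    (compat : ∀ p : J × J,
      W.map (pullback.fst (f p.1) (f p.2)).op (w p.1) =
        W.map (pullback.snd (f p.1) (f p.2)).op (w p.2))
    {T : Cᵒᵖ} (s : (sieveFunctor Uj f).obj T) {j : J} (h : T.unop ⟶ Uj j)
    (hh : h ≫ f j = s.1) :
    (mkNatTrans Uj f w compat).app T s = W.map h.op (w j) := by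
  show W.map (fac Uj f s).op (w (idx Uj f s)) = W.map h.op (w j)
  exact compat_of_pullback Uj f w compat _ _ (by rw [fac_spec, hh])

lemma mkNatTrans_elt {W : Cᵒᵖ ⥤ Type u} (w : ∀ j, W.obj (op (Uj j)))
    (compat : ∀ p : J × J,
      W.map (pullback.fst (f p.1) (f p.2)).op (w p.1) =
        W.map (pullback.snd (f p.1) (f p.2)).op (w p.2)) (j : J) :
    (mkNatTrans Uj f w compat).app (op (Uj j)) (elt Uj f j) = w j := by
  rw [mkNatTrans_app Uj f w compat (elt Uj f j) (𝟙 (Uj j)) (Category.id_comp _)]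
  simp

section Part1

lemma indep {W : Cᵒᵖ ⥤ Type u} (σ : (∐ fun j => yoneda.obj (Uj j)) ⟶ W)
    (hσ : sieveFst Uj f ≫ σ = sieveSnd Uj f ≫ σ)
    {T : C} {j j' : J} (h : T ⟶ Uj j) (h' : T ⟶ Uj j') (hw : h ≫ f j = h' ≫ f j') :
    (Sigma.ι (fun j => yoneda.obj (Uj j)) j ≫ σ).app (op T) h =
      (Sigma.ι (fun j => yoneda.obj (Uj j)) j' ≫ σ).app (op T) h' := by
  have h1 : yoneda.map (pullback.fst (f j) (f j')) ≫
        Sigma.ι (fun j => yoneda.obj (Uj j)) j ≫ σ =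
      yoneda.map (pullback.snd (f j) (f j')) ≫
        Sigma.ι (fun j => yoneda.obj (Uj j)) j' ≫ σ := by
    have h0 := Sigma.ι (fun p : J × J => yoneda.obj (pullback (f p.1) (f p.2))) (j, j') ≫= hσ
    simpa [sieveFst, sieveSnd] using h0
  have h2 := types_congr_hom (NatTrans.congr_app h1 (op T)) (pullback.lift h h' hw)
  simp at h2
  rwa [pullback.lift_fst, pullback.lift_snd] at h2

/-- The tautological elements of `W` associated to a cofork map `σ`. -/
noncomputable def coforkElt {W : Cᵒᵖ ⥤ Type u} (σ : (∐ fun j => yoneda.obj (Uj j)) ⟶ W)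
    (j : J) : W.obj (op (Uj j)) :=
  (Sigma.ι (fun j => yoneda.obj (Uj j)) j ≫ σ).app (op (Uj j)) (𝟙 (Uj j))

lemma coforkElt_map {W : Cᵒᵖ ⥤ Type u} (σ : (∐ fun j => yoneda.obj (Uj j)) ⟶ W)
    {T : C} {j : J} (h : T ⟶ Uj j) :
    W.map h.op (coforkElt Uj σ j) =
      (Sigma.ι (fun j => yoneda.obj (Uj j)) j ≫ σ).app (op T) h := by
  have := types_congr_hom ((Sigma.ι (fun j => yoneda.obj (Uj j)) j ≫ σ).naturality h.op) (𝟙 (Uj j))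
  dsimp at this
  simpa [coforkElt] using this.symm

lemma coforkElt_compat {W : Cᵒᵖ ⥤ Type u} (σ : (∐ fun j => yoneda.obj (Uj j)) ⟶ W)
    (hσ : sieveFst Uj f ≫ σ = sieveSnd Uj f ≫ σ) (p : J × J) :
    W.map (pullback.fst (f p.1) (f p.2)).op (coforkElt Uj σ p.1) =
      W.map (pullback.snd (f p.1) (f p.2)).op (coforkElt Uj σ p.2) := by
  rw [coforkElt_map, coforkElt_map]
  exact indep Uj f σ hσ _ _ pullback.condition

/-- The descent map for the coequalizer. -/
noncomputable def coforkDesc {W : Cᵒᵖ ⥤ Type u} (σ : (∐ fun j => yoneda.obj (Uj j)) ⟶ W)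
    (hσ : sieveFst Uj f ≫ σ = sieveSnd Uj f ≫ σ) : sieveFunctor Uj f ⟶ W :=
  mkNatTrans Uj f (coforkElt Uj σ) (coforkElt_compat Uj f σ hσ)

lemma pi_elt (j : J) :
    (Sigma.ι (fun j => yoneda.obj (Uj j)) j ≫ sievePi Uj f).app (op (Uj j)) (𝟙 (Uj j)) =
      elt Uj f j := by
  have : Sigma.ι (fun j => yoneda.obj (Uj j)) j ≫ sievePi Uj f =
      { app := fun T => TypeCat.ofHom fun (g : T.unop ⟶ Uj j) =>
          ⟨g ≫ f j, Uj j, g, f j, Presieve.ofArrows.mk j, rfl⟩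
        naturality := by
          intros T T' u
          ext g
          apply Subtype.ext
          show (u.unop ≫ g) ≫ f j = u.unop ≫ (g ≫ f j)
          simp } := by
    simp [sievePi]
  rw [this]
  exact Subtype.ext (Category.id_comp _)

lemma coforkDesc_fac {W : Cᵒᵖ ⥤ Type u} (σ : (∐ fun j => yoneda.obj (Uj j)) ⟶ W)
    (hσ : sieveFst Uj f ≫ σ = sieveSnd Uj f ≫ σ) :
    sievePi Uj f ≫ coforkDesc Uj f σ hσ = σ := by
  apply Sigma.hom_ext
  intro j
  ext T (h : T.unop ⟶ Uj j)
  have hval : ((Sigma.ι (fun j => yoneda.obj (Uj j)) j ≫ sievePi Uj f).app T h).1 = h ≫ f j := by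
    have : Sigma.ι (fun j => yoneda.obj (Uj j)) j ≫ sievePi Uj f =
        { app := fun T => TypeCat.ofHom fun (g : T.unop ⟶ Uj j) =>
            ⟨g ≫ f j, Uj j, g, f j, Presieve.ofArrows.mk j, rfl⟩
          naturality := by
            intros T T' u
            ext g
            apply Subtype.ext
            show (u.unop ≫ g) ≫ f j = u.unop ≫ (g ≫ f j)
            simp } := by
      simp [sievePi]
    rw [this]
    rfl
  show (coforkDesc Uj f σ hσ).app T ((Sigma.ι (fun j => yoneda.obj (Uj j)) j ≫ sievePi Uj f).app T h) = _
  rw [show coforkDesc Uj f σ hσ = mkNatTrans Uj f (coforkElt Uj σ) (coforkElt_compat Uj f σ hσ) from rfl,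
    mkNatTrans_app Uj f _ _ _ h hval.symm, coforkElt_map]
  rfl

/-- Part (1): the sieve is the coequalizer. -/
noncomputable def sieveIsColimit :
    IsColimit (Cofork.ofπ (sievePi Uj f) (sieve_cofork_condition Uj f)) := by
  refine Cofork.IsColimit.mk _
    (fun s => coforkDesc Uj f s.π s.condition)
    (fun s => coforkDesc_fac Uj f s.π s.condition)
    (fun s m hm => ?_)
  apply natTrans_ext_of_elt Uj f
  intro j
  show m.app (op (Uj j)) (elt Uj f j) =
    (coforkDesc Uj f s.π s.condition).app (op (Uj j)) (elt Uj f j)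
  rw [show coforkDesc Uj f s.π s.condition =
      mkNatTrans Uj f (coforkElt Uj s.π) (coforkElt_compat Uj f s.π s.condition) from rfl,
    mkNatTrans_elt]
  rw [← pi_elt Uj f j]
  have := types_congr_hom (NatTrans.congr_app ((Sigma.ι (fun j => yoneda.obj (Uj j)) j ≫= hm)) (op (Uj j)))
    (𝟙 (Uj j))
  simpa [coforkElt] using this

end Part1

section Part2

variable [Finite J]
variable {I : Type u} [SmallCategory I] [IsFiltered I] (F : I ⥤ Cᵒᵖ ⥤ Type u)

lemma eval_eq {T : Cᵒᵖ} {i : I} {x y : (F.obj i).obj T}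
    (h : (colimit.ι F i).app T x = (colimit.ι F i).app T y) :
    ∃ (k : I) (g : i ⟶ k), (F.map g).app T x = (F.map g).app T y := by
  have hc : IsColimit (((evaluation Cᵒᵖ (Type u)).obj T).mapCocone (colimit.cocone F)) :=
    isColimitOfPreserves _ (colimit.isColimit F)
  obtain ⟨k, g₁, g₂, hg⟩ := (Types.FilteredColimit.isColimit_eq_iff
      (F ⋙ (evaluation Cᵒᵖ (Type u)).obj T) hc (i := i) (j := i) (xi := x) (xj := y)).mp h
  refine ⟨IsFiltered.coeq g₁ g₂, g₁ ≫ IsFiltered.coeqHom g₁ g₂, ?_⟩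
  have hg' : (F.map g₁).app T x = (F.map g₂).app T y := hg
  calc (F.map (g₁ ≫ IsFiltered.coeqHom g₁ g₂)).app T x
      = (F.map (IsFiltered.coeqHom g₁ g₂)).app T ((F.map g₁).app T x) := by
        rw [F.map_comp]; rfl
    _ = (F.map (IsFiltered.coeqHom g₁ g₂)).app T ((F.map g₂).app T y) := by rw [hg']
    _ = (F.map (g₂ ≫ IsFiltered.coeqHom g₁ g₂)).app T y := by rw [F.map_comp]; rfl
    _ = (F.map (g₁ ≫ IsFiltered.coeqHom g₁ g₂)).app T y := by
        rw [← IsFiltered.coeq_condition]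

lemma finite_coeq {J' : Type*} [Finite J'] {i : I} {X : J' → Cᵒᵖ}
    {a b : ∀ j, (F.obj i).obj (X j)}
    (H : ∀ j, ∃ (k : I) (g : i ⟶ k),
      (F.map g).app (X j) (a j) = (F.map g).app (X j) (b j)) :
    ∃ (k : I) (g : i ⟶ k), ∀ j,
      (F.map g).app (X j) (a j) = (F.map g).app (X j) (b j) := by
  classical
  have : Fintype J' := Fintype.ofFinite J'
  choose k g hg using H
  let O : Finset I := insert i (Finset.image k Finset.univ)
  have hiO : i ∈ O := Finset.mem_insert_self _ _
  have hkO : ∀ j, k j ∈ O := fun j =>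
    Finset.mem_insert_of_mem (Finset.mem_image_of_mem _ (Finset.mem_univ j))
  let H' : Finset (Σ' (X Y : I) (_ : X ∈ O) (_ : Y ∈ O), X ⟶ Y) :=
    Finset.image (fun j => ⟨i, k j, hiO, hkO j, g j⟩) Finset.univ
  obtain ⟨S, T, W⟩ := IsFiltered.sup_exists O H'
  refine ⟨S, T hiO, fun j => ?_⟩
  have hcomm : g j ≫ T (hkO j) = T hiO :=
    W hiO (hkO j) (Finset.mem_image_of_mem _ (Finset.mem_univ j))
  rw [← hcomm, F.map_comp]
  show (F.map (T (hkO j))).app _ ((F.map (g j)).app _ (a j)) =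
    (F.map (T (hkO j))).app _ ((F.map (g j)).app _ (b j))
  rw [hg j]

lemma finite_sup {J' : Type*} [Finite J'] (k : J' → I) :
    ∃ m : I, ∀ j, Nonempty (k j ⟶ m) := by
  classical
  have : Fintype J' := Fintype.ofFinite J'
  obtain ⟨S, hS⟩ := IsFiltered.sup_objs_exists (Finset.image k Finset.univ)
  exact ⟨S, fun j => hS (Finset.mem_image_of_mem _ (Finset.mem_univ j))⟩

lemma post_ι (i : I) (η : sieveFunctor Uj f ⟶ F.obj i) :
    colimit.post F (coyoneda.obj (op (sieveFunctor Uj f)))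
        (colimit.ι (F ⋙ coyoneda.obj (op (sieveFunctor Uj f))) i η) =
      η ≫ colimit.ι F i := by
  have := types_congr_hom (colimit.ι_post F (coyoneda.obj (op (sieveFunctor Uj f))) i) η
  exact this

lemma ι_stage (i k : I) (u : i ⟶ k) (η : sieveFunctor Uj f ⟶ F.obj i) :
    colimit.ι (F ⋙ coyoneda.obj (op (sieveFunctor Uj f))) i η =
      colimit.ι (F ⋙ coyoneda.obj (op (sieveFunctor Uj f))) k (η ≫ F.map u) := by
  have := types_congr_hom (colimit.w (F ⋙ coyoneda.obj (op (sieveFunctor Uj f))) u) η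
  exact this.symm

lemma post_inj :
    Function.Injective (colimit.post F (coyoneda.obj (op (sieveFunctor Uj f)))) := by
  intro x y hxy
  obtain ⟨i₁, η₁, rfl⟩ := Types.jointly_surjective'
    (F := F ⋙ coyoneda.obj (op (sieveFunctor Uj f))) x
  obtain ⟨i₂, η₂, rfl⟩ := Types.jointly_surjective'
    (F := F ⋙ coyoneda.obj (op (sieveFunctor Uj f))) y
  rw [post_ι, post_ι] at hxy
  set k := IsFiltered.max i₁ i₂ with hk
  rw [ι_stage Uj f F i₁ k (IsFiltered.leftToMax i₁ i₂) η₁,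
    ι_stage Uj f F i₂ k (IsFiltered.rightToMax i₁ i₂) η₂]
  set θ₁ := η₁ ≫ F.map (IsFiltered.leftToMax i₁ i₂) with hθ₁
  set θ₂ := η₂ ≫ F.map (IsFiltered.rightToMax i₁ i₂) with hθ₂
  have hcomm : θ₁ ≫ colimit.ι F k = θ₂ ≫ colimit.ι F k := by
    rw [hθ₁, hθ₂, Category.assoc, Category.assoc, colimit.w, colimit.w]
    exact hxy
  have hj : ∀ j : J, ∃ (m : I) (g : k ⟶ m),
      (F.map g).app (op (Uj j)) (θ₁.app (op (Uj j)) (elt Uj f j)) =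
      (F.map g).app (op (Uj j)) (θ₂.app (op (Uj j)) (elt Uj f j)) := by
    intro j
    apply eval_eq
    exact types_congr_hom (NatTrans.congr_app hcomm (op (Uj j))) (elt Uj f j)
  obtain ⟨m, g, hgm⟩ := finite_coeq F hj
  have : θ₁ ≫ F.map g = θ₂ ≫ F.map g := by
    apply natTrans_ext_of_elt Uj f
    intro j
    exact hgm j
  rw [ι_stage Uj f F k m g θ₁, ι_stage Uj f F k m g θ₂, this]

lemma post_surj :
    Function.Surjective (colimit.post F (coyoneda.obj (op (sieveFunctor Uj f)))) := by
  intro η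
  have hx : ∀ j : J, ∃ (i : I) (v : (F.obj i).obj (op (Uj j))),
      (colimit.ι F i).app (op (Uj j)) v = η.app (op (Uj j)) (elt Uj f j) := by
    intro j
    obtain ⟨i, v, hv⟩ := FunctorToTypes.jointly_surjective' F (op (Uj j))
      (η.app (op (Uj j)) (elt Uj f j))
    exact ⟨i, v, hv.symm⟩
  choose ik v hv using hx
  obtain ⟨i₀, ht⟩ := finite_sup (I := I) ik
  let t : ∀ j, ik j ⟶ i₀ := fun j => (ht j).some
  let z : ∀ j, (F.obj i₀).obj (op (Uj j)) := fun j => (F.map (t j)).app _ (v j)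
  have hz : ∀ j, (colimit.ι F i₀).app (op (Uj j)) (z j) = η.app (op (Uj j)) (elt Uj f j) := by
    intro j
    rw [← hv j]
    exact types_congr_hom (NatTrans.congr_app (colimit.w F (t j)) (op (Uj j))) (v j)
  have hcomp : ∀ p : J × J, ∃ (m : I) (g : i₀ ⟶ m),
      (F.map g).app (op (pullback (f p.1) (f p.2)))
          ((F.obj i₀).map (pullback.fst (f p.1) (f p.2)).op (z p.1)) =
      (F.map g).app (op (pullback (f p.1) (f p.2)))
          ((F.obj i₀).map (pullback.snd (f p.1) (f p.2)).op (z p.2)) := by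
    intro p
    apply eval_eq
    have h1 := NatTrans.naturality_apply (colimit.ι F i₀)
      (pullback.fst (f p.1) (f p.2)).op (z p.1)
    have h2 := NatTrans.naturality_apply (colimit.ι F i₀)
      (pullback.snd (f p.1) (f p.2)).op (z p.2)
    rw [h1, h2, hz p.1, hz p.2,
      ← NatTrans.naturality_apply η (pullback.fst (f p.1) (f p.2)).op (elt Uj f p.1),
      ← NatTrans.naturality_apply η (pullback.snd (f p.1) (f p.2)).op (elt Uj f p.2)]
    exact congrArg (η.app (op (pullback (f p.1) (f p.2)))) (Subtype.ext pullback.condition)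
  obtain ⟨m, g, hgm⟩ := finite_coeq F hcomp
  let w' : ∀ j, (F.obj m).obj (op (Uj j)) := fun j => (F.map g).app _ (z j)
  have compat : ∀ p : J × J,
      (F.obj m).map (pullback.fst (f p.1) (f p.2)).op (w' p.1) =
        (F.obj m).map (pullback.snd (f p.1) (f p.2)).op (w' p.2) := by
    intro p
    have n1 := NatTrans.naturality_apply (F.map g)
      (pullback.fst (f p.1) (f p.2)).op (z p.1)
    have n2 := NatTrans.naturality_apply (F.map g)
      (pullback.snd (f p.1) (f p.2)).op (z p.2)
    show (F.obj m).map _ ((F.map g).app _ (z p.1)) = (F.obj m).map _ ((F.map g).app _ (z p.2))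
    rw [← n1, ← n2]
    exact hgm p
  refine ⟨colimit.ι (F ⋙ coyoneda.obj (op (sieveFunctor Uj f))) m
    (mkNatTrans Uj f w' compat), ?_⟩
  rw [post_ι]
  apply natTrans_ext_of_elt Uj f
  intro j
  show (colimit.ι F m).app (op (Uj j)) ((mkNatTrans Uj f w' compat).app (op (Uj j)) (elt Uj f j)) =
    η.app (op (Uj j)) (elt Uj f j)
  rw [mkNatTrans_elt]
  show (colimit.ι F m).app (op (Uj j)) ((F.map g).app _ (z j)) = _
  rw [← hz j]
  exact types_congr_hom (NatTrans.congr_app (colimit.w F g) (op (Uj j))) (z j)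

end Part2

end

end Statement14Aux

/-- For a finite family `{f_j : U_j → U}` in a small category `C`
such that the fiber products `U_j ×_U U_{j'}` exist, the sieve `h_𝒰 ⊆ h_U`
generated by the family is (1) the coequalizer of the two natural maps
`∐_{j,j'} h_{U_j ×_U U_{j'}} ⇉ ∐_j h_{U_j}` in presheaves of sets, and
(2) a compact object of the presheaf category: `Hom(h_𝒰, −)` preserves filtered
colimits. -/
theorem statement14 {C : Type u} [SmallCategory C] (U : C) (J : Type u) [Finite J]
    (Uj : J → C) (f : ∀ j, Uj j ⟶ U) [∀ j j', HasPullback (f j) (f j')] :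
    Nonempty (IsColimit (Cofork.ofπ (sievePi Uj f) (sieve_cofork_condition Uj f))) ∧
    ∀ (I : Type u) [SmallCategory I] [IsFiltered I] (F : I ⥤ (Cᵒᵖ ⥤ Type u)),
      Function.Bijective
        (colimit.desc (F ⋙ coyoneda.obj (op (sieveFunctor Uj f)))
          ((coyoneda.obj (op (sieveFunctor Uj f))).mapCocone (colimit.cocone F))) := by
  constructor
  · exact ⟨Statement14Aux.sieveIsColimit Uj f⟩
  · intro I _ _ F
    show Function.Bijective (colimit.post F (coyoneda.obj (op (sieveFunctor Uj f))))
    exact ⟨Statement14Aux.post_inj Uj f F, Statement14Aux.post_surj Uj f F⟩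
end

section
/- Let k be a field and n ≥ 0. Define Φ: GL_{n+1}(k) → k^{n+1} × k^{n+1} by Φ(A) = (x, y), where x is the first column of A and y is the transpose of the first row of A⁻¹. Then: (1) Φ(A) lies in U_n(k) := {(x,y) ∈ k^{n+1} × k^{n+1} : Σ_i x_i y_i = 1}; (2) Φ is surjective onto U_n(k); and (3) for A, A' ∈ GL_{n+1}(k), Φ(A) = Φ(A') if and only if A' = A·B for some block-diagonal matrix B = diag(1, M) with M ∈ GL_n(k). Consequently, Φ induces a bijection between the coset space GL_{n+1}(k)/(1 × GL_n(k)) and U_n(k). -/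
open Matrix

lemma statement16_aux (k : Type*) [Field k] (n : ℕ) (x y : Fin (n+1) → k) (h0 : y 0 ≠ 0)
    (h : ∑ i, x i * y i = 1) :
    ∃ M N : Matrix (Fin (n+1)) (Fin (n+1)) k,
      M * N = 1 ∧ N * M = 1 ∧ (∀ i, M i 0 = x i) ∧ (∀ j, N 0 j = y j) := by
  set M : Matrix (Fin (n+1)) (Fin (n+1)) k :=
    Matrix.of fun i j => if j = 0 then x i else if i = 0 then -(y j)/(y 0)
      else if i = j then 1 else 0 with hM
  set N : Matrix (Fin (n+1)) (Fin (n+1)) k :=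
    Matrix.of fun i j => if i = 0 then y j else (if i = j then 1 else 0) - x i * y j with hN
  have hrow : ∀ j, ∑ l, y l * M l j = if j = 0 then 1 else 0 := by
    intro j
    by_cases hj : j = 0
    · subst hj
      simp only [hM, Matrix.of_apply, if_pos rfl, if_true]
      rw [← h]
      exact Finset.sum_congr rfl fun l _ => by ring
    · have key : ∀ l : Fin (n+1), y l * M l j
          = (if l = 0 then y 0 * (-(y j)/(y 0)) else 0) + (if l = j then y l else 0) := by
        intro l
        simp only [hM, Matrix.of_apply, if_neg hj]
        split_ifs <;> subst_vars <;> (try exact absurd rfl (by assumption)) <;>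
          (try ring) <;> field_simp <;> ring_nf
      rw [Finset.sum_congr rfl fun l _ => key l, Finset.sum_add_distrib,
        Finset.sum_ite_eq' Finset.univ (0 : Fin (n+1)),
        Finset.sum_ite_eq' Finset.univ j]
      rw [if_neg hj]
      simp only [Finset.mem_univ, if_true, ite_true]
      field_simp
      try ring
  refine ⟨M, N, ?_, ?_, fun i => by simp [hM], fun j => by simp [hN]⟩
  · -- M * N = 1
    ext i j
    rw [Matrix.mul_apply, Matrix.one_apply]
    by_cases hi : i = 0
    · subst hi
      have key : ∀ l : Fin (n+1), M 0 l * N l j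
          = x l * y l * (y j / y 0) + (if l = j then (if l = 0 then 0 else -(y l)/(y 0)) else 0) := by
        intro l
        simp only [hM, hN, Matrix.of_apply]
        split_ifs <;> subst_vars <;> (try exact absurd rfl (by assumption)) <;>
          (try ring) <;> field_simp <;> ring_nf
      rw [Finset.sum_congr rfl fun l _ => key l, Finset.sum_add_distrib, ← Finset.sum_mul, h,
        Finset.sum_ite_eq' Finset.univ j]
      simp only [Finset.mem_univ, if_true, ite_true]
      by_cases hj : j = 0
      · subst hj
        rw [if_pos rfl, if_pos rfl]
        field_simp
        try ring
      · rw [if_neg (fun h' : (0:Fin (n+1)) = j => hj h'.symm), if_neg hj]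
        field_simp
        try ring
    · have key : ∀ l : Fin (n+1), M i l * N l j
          = (if l = 0 then x i * y j else 0)
            + (if l = i then (if i = j then 1 else 0) - x i * y j else 0) := by
        intro l
        simp only [hM, hN, Matrix.of_apply]
        split_ifs <;> subst_vars <;> (try exact absurd rfl (by assumption)) <;>
          (try ring) <;> field_simp <;> ring_nf
      rw [Finset.sum_congr rfl fun l _ => key l, Finset.sum_add_distrib,
        Finset.sum_ite_eq' Finset.univ (0 : Fin (n+1)),
        Finset.sum_ite_eq' Finset.univ i]
      simp only [Finset.mem_univ, if_true, ite_true]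
      ring
  · -- N * M = 1
    ext i j
    rw [Matrix.mul_apply, Matrix.one_apply]
    by_cases hi : i = 0
    · subst hi
      have : ∀ l, N 0 l * M l j = y l * M l j := fun l => by simp [hN]
      rw [Finset.sum_congr rfl fun l _ => this l, hrow]
      by_cases hj : j = 0
      · subst hj; simp
      · rw [if_neg hj, if_neg (fun h' : (0:Fin (n+1)) = j => hj h'.symm)]
    · have key : ∀ l : Fin (n+1), N i l * M l j
          = (if l = i then M i j else 0) - x i * (y l * M l j) := by
        intro l
        by_cases hli : l = i
        · subst hli
          rw [if_pos rfl]
          simp only [hN, Matrix.of_apply, if_neg hi, if_pos rfl, if_true]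
          ring
        · rw [if_neg hli]
          simp only [hN, Matrix.of_apply, if_neg (fun h' : i = l => hli h'.symm), if_neg hi]
          ring
      rw [Finset.sum_congr rfl fun l _ => key l, Finset.sum_sub_distrib,
        Finset.sum_ite_eq' Finset.univ i, ← Finset.mul_sum, hrow]
      rw [if_pos (Finset.mem_univ i)]
      by_cases hj : j = 0
      · subst hj
        rw [if_pos rfl, if_neg hi]
        simp [hM, hi]
      · rw [if_neg hj, mul_zero, sub_zero]
        simp only [hM, Matrix.of_apply, if_neg hj, if_neg hi]

/-- For a field `k` and `n ≥ 0`, the map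
`Φ : GL_{n+1}(k) → k^{n+1} × k^{n+1}`, `Φ(A) = (first column of A, first row of A⁻¹)`,
lands in `U_n(k) = {(x,y) : Σ xᵢyᵢ = 1}`, is surjective onto `U_n(k)`, and
`Φ(A) = Φ(A')` iff `A' = A·B` for some block-diagonal `B = diag(1, M)`, `M ∈ GL_n(k)`. -/
theorem statement16 (k : Type*) [Field k] (n : ℕ) :
    -- (1) `Φ(A) ∈ U_n(k)`
    (∀ A : GL (Fin (n + 1)) k,
      ∑ i, (A : Matrix (Fin (n + 1)) (Fin (n + 1)) k) i 0
          * ((A⁻¹ : GL (Fin (n + 1)) k) : Matrix (Fin (n + 1)) (Fin (n + 1)) k) 0 i = 1) ∧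
    -- (2) surjectivity onto `U_n(k)`
    (∀ x y : Fin (n + 1) → k, ∑ i, x i * y i = 1 →
      ∃ A : GL (Fin (n + 1)) k,
        (∀ i, (A : Matrix (Fin (n + 1)) (Fin (n + 1)) k) i 0 = x i) ∧
        (∀ i, ((A⁻¹ : GL (Fin (n + 1)) k) : Matrix (Fin (n + 1)) (Fin (n + 1)) k) 0 i = y i)) ∧
    -- (3) the fibres of `Φ` are the right cosets of `1 × GL_n(k)`
    (∀ A A' : GL (Fin (n + 1)) k,
      ((∀ i, (A : Matrix (Fin (n + 1)) (Fin (n + 1)) k) i 0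
            = (A' : Matrix (Fin (n + 1)) (Fin (n + 1)) k) i 0) ∧
       (∀ i, ((A⁻¹ : GL (Fin (n + 1)) k) : Matrix (Fin (n + 1)) (Fin (n + 1)) k) 0 i
            = ((A'⁻¹ : GL (Fin (n + 1)) k) : Matrix (Fin (n + 1)) (Fin (n + 1)) k) 0 i))
        ↔ ∃ B : GL (Fin (n + 1)) k,
            (∀ i, (B : Matrix (Fin (n + 1)) (Fin (n + 1)) k) i 0
              = if i = 0 then 1 else 0) ∧
            (∀ j, (B : Matrix (Fin (n + 1)) (Fin (n + 1)) k) 0 j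
              = if j = 0 then 1 else 0) ∧
            A' = A * B) := by
  refine ⟨?_, ?_, ?_⟩
  · -- (1)
    intro A
    have hAinvA : ((A⁻¹ : GL (Fin (n+1)) k) : (Matrix (Fin (n+1)) (Fin (n+1)) k)) * (A : (Matrix (Fin (n+1)) (Fin (n+1)) k)) = 1 := by
      rw [← Units.val_mul, inv_mul_cancel]; rfl
    have h1 := congrFun (congrFun hAinvA 0) 0
    rw [Matrix.mul_apply, Matrix.one_apply_eq] at h1
    rw [← h1]
    exact Finset.sum_congr rfl fun i _ => mul_comm _ _
  · -- (2)
    intro x y h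
    -- find a nonzero coordinate of y
    have hy : ∃ i₀, y i₀ ≠ 0 := by
      by_contra hc
      push_neg at hc
      rw [Finset.sum_congr rfl fun i _ => by rw [hc i, mul_zero]] at h
      simp at h
    obtain ⟨i₀, hi₀⟩ := hy
    set σ : Equiv.Perm (Fin (n+1)) := Equiv.swap 0 i₀ with hσ
    have hσσ : ∀ i, σ (σ i) = i := fun i => Equiv.swap_apply_self _ _ _
    have h0' : (y ∘ σ) 0 ≠ 0 := by
      simpa [hσ, Equiv.swap_apply_left] using hi₀
    have h' : ∑ i, (x ∘ σ) i * (y ∘ σ) i = 1 := by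
      rw [← h]
      exact Equiv.sum_comp σ (fun i => x i * y i)
    obtain ⟨M, N, hMN, hNM, hMc, hNr⟩ := statement16_aux k n (x ∘ σ) (y ∘ σ) h0' h'
    refine ⟨⟨M.submatrix σ id, N.submatrix id σ, ?_, ?_⟩, ?_, ?_⟩
    · rw [show (Matrix.submatrix M σ id) * (Matrix.submatrix N id σ)
          = (M * N).submatrix σ σ from ?_, hMN, Matrix.submatrix_one_equiv σ]
      rw [← Matrix.submatrix_mul_equiv M N σ (Equiv.refl _) σ]
      rfl
    · rw [show (Matrix.submatrix N id σ) * (Matrix.submatrix M σ id)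
          = (N * M).submatrix (Equiv.refl (Fin (n+1))) (Equiv.refl (Fin (n+1))) from ?_, hNM]
      · simp
      rw [← Matrix.submatrix_mul_equiv N M (Equiv.refl _) σ (Equiv.refl _)]
      rfl
    · intro i
      show M.submatrix σ id i 0 = x i
      rw [Matrix.submatrix_apply]
      simpa using (hMc (σ i)).trans (by simp [hσσ])
    · intro i
      show N.submatrix id σ 0 i = y i
      rw [Matrix.submatrix_apply]
      simpa using (hNr (σ i)).trans (by simp [hσσ])
  · -- (3)
    intro A A'
    constructor
    · rintro ⟨hc, hr⟩
      refine ⟨A⁻¹ * A', ?_, ?_, by rw [← mul_assoc, mul_inv_cancel, one_mul]⟩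
      · intro i
        have hmul : ((A⁻¹ * A' : GL (Fin (n+1)) k) : (Matrix (Fin (n+1)) (Fin (n+1)) k))
            = ((A⁻¹ : GL (Fin (n+1)) k) : (Matrix (Fin (n+1)) (Fin (n+1)) k)) * (A' : (Matrix (Fin (n+1)) (Fin (n+1)) k)) := Units.val_mul _ _
        rw [hmul, Matrix.mul_apply]
        have h1 : ((A⁻¹ : GL (Fin (n+1)) k) : (Matrix (Fin (n+1)) (Fin (n+1)) k)) * (A : (Matrix (Fin (n+1)) (Fin (n+1)) k)) = 1 := by
          rw [← Units.val_mul, inv_mul_cancel]; rfl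
        calc ∑ l, ((A⁻¹ : GL (Fin (n+1)) k) : (Matrix (Fin (n+1)) (Fin (n+1)) k)) i l * (A' : (Matrix (Fin (n+1)) (Fin (n+1)) k)) l 0
            = ∑ l, ((A⁻¹ : GL (Fin (n+1)) k) : (Matrix (Fin (n+1)) (Fin (n+1)) k)) i l * (A : (Matrix (Fin (n+1)) (Fin (n+1)) k)) l 0 :=
              Finset.sum_congr rfl fun l _ => by rw [hc l]
          _ = (1 : (Matrix (Fin (n+1)) (Fin (n+1)) k)) i 0 := by rw [← h1, Matrix.mul_apply]
          _ = _ := by rw [Matrix.one_apply]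
      · intro j
        have hmul : ((A⁻¹ * A' : GL (Fin (n+1)) k) : (Matrix (Fin (n+1)) (Fin (n+1)) k))
            = ((A⁻¹ : GL (Fin (n+1)) k) : (Matrix (Fin (n+1)) (Fin (n+1)) k)) * (A' : (Matrix (Fin (n+1)) (Fin (n+1)) k)) := Units.val_mul _ _
        rw [hmul, Matrix.mul_apply]
        have h1 : ((A'⁻¹ : GL (Fin (n+1)) k) : (Matrix (Fin (n+1)) (Fin (n+1)) k)) * (A' : (Matrix (Fin (n+1)) (Fin (n+1)) k)) = 1 := by
          rw [← Units.val_mul, inv_mul_cancel]; rfl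
        calc ∑ l, ((A⁻¹ : GL (Fin (n+1)) k) : (Matrix (Fin (n+1)) (Fin (n+1)) k)) 0 l * (A' : (Matrix (Fin (n+1)) (Fin (n+1)) k)) l j
            = ∑ l, ((A'⁻¹ : GL (Fin (n+1)) k) : (Matrix (Fin (n+1)) (Fin (n+1)) k)) 0 l * (A' : (Matrix (Fin (n+1)) (Fin (n+1)) k)) l j :=
              Finset.sum_congr rfl fun l _ => by rw [hr l]
          _ = (1 : (Matrix (Fin (n+1)) (Fin (n+1)) k)) 0 j := by rw [← h1, Matrix.mul_apply]
          _ = _ := by rw [Matrix.one_apply]; simp [eq_comm]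
    · rintro ⟨B, hBc, hBr, rfl⟩
      constructor
      · intro i
        have hmul : ((A * B : GL (Fin (n+1)) k) : (Matrix (Fin (n+1)) (Fin (n+1)) k))
            = (A : (Matrix (Fin (n+1)) (Fin (n+1)) k)) * (B : (Matrix (Fin (n+1)) (Fin (n+1)) k)) := Units.val_mul _ _
        rw [hmul, Matrix.mul_apply]
        simp only [hBc, mul_ite, mul_one, mul_zero]
        simp
      · intro i
        have hinv : ∀ j, ((B⁻¹ : GL (Fin (n+1)) k) : (Matrix (Fin (n+1)) (Fin (n+1)) k)) 0 j = if j = 0 then 1 else 0 := by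
          intro j
          have h1 : (B : (Matrix (Fin (n+1)) (Fin (n+1)) k)) * ((B⁻¹ : GL (Fin (n+1)) k) : (Matrix (Fin (n+1)) (Fin (n+1)) k)) = 1 := by
            rw [← Units.val_mul, mul_inv_cancel]; rfl
          have h2 := congrFun (congrFun h1 0) j
          rw [Matrix.mul_apply] at h2
          simp only [hBr, ite_mul, one_mul, zero_mul] at h2
          rw [Finset.sum_ite_eq' Finset.univ (0 : Fin (n+1))
            (fun l => ((B⁻¹ : GL (Fin (n+1)) k) : (Matrix (Fin (n+1)) (Fin (n+1)) k)) l j)] at h2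
          simpa [Matrix.one_apply, eq_comm] using h2
        have h2 : (((A * B)⁻¹ : GL (Fin (n+1)) k) : (Matrix (Fin (n+1)) (Fin (n+1)) k))
            = ((B⁻¹ : GL (Fin (n+1)) k) : (Matrix (Fin (n+1)) (Fin (n+1)) k)) * ((A⁻¹ : GL (Fin (n+1)) k) : (Matrix (Fin (n+1)) (Fin (n+1)) k)) := by
          rw [_root_.mul_inv_rev]; exact Units.val_mul _ _
        rw [h2, Matrix.mul_apply]
        simp only [hinv, ite_mul, one_mul, zero_mul]
        simp
end
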